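/- Given integers k, t ∈ ℕ with k ≥ 3 and a constant β > 0, the following holds for all sufficiently large n ∈ ℕ. Let F be a k-vertex graph and G an n-vertex graph with a partition 𝒫 = {V_1, …, V_C} of V(G) such that each V_i is (F, βn, t)-closed. For distinct i, j ∈ [C], if there exist two (F,β)-robust k-vectors s and t' with s − t' = u_i − u_j (where u_i, u_j are unit vectors in ℤ^C), then V_i ∪ V_j is (F, (β/2)n, 2kt)-closed. -/

import Mathlib

open Finset

namespace RTT

variable {k n : ℕ}

/-- `S` spans a copy of the `k`-vertex graph `F` in `G`:
there is an injective graph homomorphism from `F` to `G` with image exactly `S`. -/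
def SpansCopy (F : SimpleGraph (Fin k)) (G : SimpleGraph (Fin n))
    (S : Finset (Fin n)) : Prop :=
  ∃ f : Fin k → Fin n, Function.Injective f ∧
    (∀ a b, F.Adj a b → G.Adj (f a) (f b)) ∧ Finset.image f Finset.univ = S

/-- `T` is an `F`-tiling in `G`: a collection of pairwise vertex-disjoint vertex sets,
each spanning a copy of `F`. -/
def IsTiling (F : SimpleGraph (Fin k)) (G : SimpleGraph (Fin n))
    (T : Finset (Finset (Fin n))) : Prop :=
  (∀ S ∈ T, SpansCopy F G S) ∧ ∀ S ∈ T, ∀ S' ∈ T, S ≠ S' → Disjoint S S'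

/-- The induced subgraph of `G` on the vertex set `A` has a perfect `F`-tiling. -/
def PerfTilingOn (F : SimpleGraph (Fin k)) (G : SimpleGraph (Fin n))
    (A : Finset (Fin n)) : Prop :=
  ∃ T : Finset (Finset (Fin n)), IsTiling F G T ∧ T.biUnion id = A

/-- The minimum degree of `G` is at least `x`. -/
def MinDegGE (G : SimpleGraph (Fin n)) (x : ℝ) : Prop :=
  ∀ v : Fin n, x ≤ ((G.neighborSet v).ncard : ℝ)

/-- The `r`-independence number of `G` is at most `x`: every vertex set whose induced
subgraph contains no copy of `K_r` has size at most `x`. -/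
def IndepBound (G : SimpleGraph (Fin n)) (r : ℕ) (x : ℝ) : Prop :=
  ∀ S : Finset (Fin n), (∀ T ⊆ S, ¬ G.IsNClique r T) → (S.card : ℝ) ≤ x

/-- `α*(G) ≤ x`: every bipartite hole of `G` has size at most `x`. -/
def HoleBound (G : SimpleGraph (Fin n)) (x : ℝ) : Prop :=
  ∀ (s : ℕ) (U₁ U₂ : Finset (Fin n)), Disjoint U₁ U₂ → U₁.card = s → U₂.card = s →
    (∀ u ∈ U₁, ∀ v ∈ U₂, ¬ G.Adj u v) → (s : ℝ) ≤ x

/-- `A` is a `ξ`-absorbing set with respect to `V'` (for the `k`-vertex graph `F`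
in the `n`-vertex graph `G`). -/
def IsAbsorbingSet (F : SimpleGraph (Fin k)) (G : SimpleGraph (Fin n)) (ξ : ℝ)
    (V' A : Finset (Fin n)) : Prop :=
  ∀ U : Finset (Fin n), U ⊆ V' \ A → (U.card : ℝ) ≤ ξ * n →
    k ∣ (A ∪ U).card → PerfTilingOn F G (A ∪ U)

/-- `A` is an `(F,t)`-absorber for the `k`-set `S`. -/
def IsAbsorber (F : SimpleGraph (Fin k)) (G : SimpleGraph (Fin n)) (t : ℕ)
    (S A : Finset (Fin n)) : Prop :=
  Disjoint A S ∧ A.card ≤ k ^ 2 * t ∧ PerfTilingOn F G A ∧ PerfTilingOn F G (A ∪ S)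

/-- `S` has a family of at least `x` pairwise vertex-disjoint `(F,t)`-absorbers in `G`. -/
def HasManyAbsorbers (F : SimpleGraph (Fin k)) (G : SimpleGraph (Fin n)) (t : ℕ)
    (S : Finset (Fin n)) (x : ℝ) : Prop :=
  ∃ 𝒜 : Finset (Finset (Fin n)), x ≤ (𝒜.card : ℝ) ∧
    (∀ A ∈ 𝒜, IsAbsorber F G t S A) ∧
    ∀ A ∈ 𝒜, ∀ A' ∈ 𝒜, A ≠ A' → Disjoint A A'

/-- `𝒮` is an `F`-fan at `v` in `U`: a collection of pairwise disjoint `(k-1)`-sets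
`S ⊆ U \ {v}` such that `{v} ∪ S` spans a copy of `F`; its size is `𝒮.card`. -/
def IsFan (F : SimpleGraph (Fin k)) (G : SimpleGraph (Fin n)) (v : Fin n)
    (U : Finset (Fin n)) (𝒮 : Finset (Finset (Fin n))) : Prop :=
  (∀ S ∈ 𝒮, S ⊆ U.erase v ∧ S.card = k - 1 ∧ SpansCopy F G (insert v S)) ∧
    ∀ S ∈ 𝒮, ∀ S' ∈ 𝒮, S ≠ S' → Disjoint S S'

/-- `u` and `v` are `(F, m, t)`-reachable in `G`. -/
def FReachable (F : SimpleGraph (Fin k)) (G : SimpleGraph (Fin n)) (m : ℝ) (t : ℕ)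
    (u v : Fin n) : Prop :=
  ∀ W : Finset (Fin n), (W.card : ℝ) ≤ m →
    ∃ S : Finset (Fin n), Disjoint S W ∧ u ∉ S ∧ v ∉ S ∧ S.card ≤ k * t - 1 ∧
      PerfTilingOn F G (insert u S) ∧ PerfTilingOn F G (insert v S)

/-- `U` is `(F, m, t)`-closed in `G`. -/
def FClosed (F : SimpleGraph (Fin k)) (G : SimpleGraph (Fin n)) (m : ℝ) (t : ℕ)
    (U : Finset (Fin n)) : Prop :=
  ∀ u ∈ U, ∀ v ∈ U, u ≠ v → FReachable F G m t u v

/-- `P` is a partition of the vertex set of an `n`-vertex graph into `C` parts. -/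
def IsPartition {C : ℕ} (P : Fin C → Finset (Fin n)) : Prop :=
  (∀ i j, i ≠ j → Disjoint (P i) (P j)) ∧ Finset.univ.biUnion P = Finset.univ

/-- The `k`-vector `v` is `(F, β)`-robust with respect to the partition `P`:
it has coordinate sum `k`, and avoiding any set `W` of at most `βn` vertices there is
a copy of `F` whose vertex set has index vector `v`. -/
def RobustVec (F : SimpleGraph (Fin k)) (G : SimpleGraph (Fin n)) {C : ℕ}
    (P : Fin C → Finset (Fin n)) (β : ℝ) (v : Fin C → ℕ) : Prop :=
  (∑ i, v i) = k ∧
    ∀ W : Finset (Fin n), (W.card : ℝ) ≤ β * n →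
      ∃ S : Finset (Fin n), Disjoint S W ∧ SpansCopy F G S ∧ ∀ i, (S ∩ P i).card = v i

end RTT

/-! Choose vertex-disjoint copies `Ss`, `St` of `F` with index vectors `s` and `t'` that avoid
`u` and `v`. Since `s - t' = u_i - u_j`, the sets `{u} ∪ St` and `{v} ∪ Ss` have the same index
vector, so their vertices can be matched up within parts. Every part is closed, so the
reachability witnesses of the matched pairs, chosen one after another to be disjoint, combine
into a set `S₀` for which both `S₀ ∪ {u} ∪ St` and `S₀ ∪ {v} ∪ Ss` have perfect `F`-tilings.
Adding the copy `Ss`, respectively `St`, shows that `S₀ ∪ Ss ∪ St` witnesses the reachability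
of `u` and `v`. -/

namespace RTT

variable {k n : ℕ} {F : SimpleGraph (Fin k)} {G : SimpleGraph (Fin n)}

theorem SpansCopy.card_eq {S : Finset (Fin n)} (h : SpansCopy F G S) : #S = k := by
  obtain ⟨f, hf, -, rfl⟩ := h
  rw [card_image_of_injective _ hf, card_univ, Fintype.card_fin]

theorem SpansCopy.perfTilingOn {S : Finset (Fin n)} (h : SpansCopy F G S) :
    PerfTilingOn F G S :=
  ⟨{S}, ⟨by simpa using h, by simp⟩, by simp⟩

theorem perfTilingOn_empty : PerfTilingOn F G ∅ :=
  ⟨∅, ⟨by simp, by simp⟩, by simp⟩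

theorem PerfTilingOn.union {A B : Finset (Fin n)} (hA : PerfTilingOn F G A)
    (hB : PerfTilingOn F G B) (hAB : Disjoint A B) : PerfTilingOn F G (A ∪ B) := by
  obtain ⟨T₁, ⟨hT₁, hd₁⟩, rfl⟩ := hA
  obtain ⟨T₂, ⟨hT₂, hd₂⟩, rfl⟩ := hB
  refine ⟨T₁ ∪ T₂, ⟨fun S hS => ?_, fun S hS S' hS' hne => ?_⟩, union_biUnion⟩
  · rcases mem_union.mp hS with h | h
    exacts [hT₁ S h, hT₂ S h]
  · rcases mem_union.mp hS with h | h <;> rcases mem_union.mp hS' with h' | h'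
    · exact hd₁ S h S' h' hne
    · exact hAB.mono (subset_biUnion_of_mem id h) (subset_biUnion_of_mem id h')
    · exact hAB.symm.mono (subset_biUnion_of_mem id h) (subset_biUnion_of_mem id h')
    · exact hd₂ S h S' h' hne

theorem PerfTilingOn.le_card {A : Finset (Fin n)} {a : Fin n} (h : PerfTilingOn F G A)
    (ha : a ∈ A) : k ≤ #A := by
  obtain ⟨T, ⟨hT, -⟩, rfl⟩ := h
  obtain ⟨S, hS, -⟩ := mem_biUnion.mp ha
  exact (hT S hS).card_eq ▸ card_le_card (subset_biUnion_of_mem id hS)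

theorem FReachable.mono {m m' : ℝ} {t t' : ℕ} {u v : Fin n} (h : FReachable F G m t u v)
    (hm : m' ≤ m) (ht : t ≤ t') : FReachable F G m' t' u v := by
  intro W hW
  obtain ⟨S, hSW, hu, hv, hS, htu, htv⟩ := h W (hW.trans hm)
  exact ⟨S, hSW, hu, hv, hS.trans (Nat.sub_le_sub_right (Nat.mul_le_mul_left k ht) 1), htu, htv⟩

theorem PerfTilingOn.insert_union_of_spansCopy {S X Y : Finset (Fin n)} {x : Fin n}
    (h : PerfTilingOn F G (S ∪ insert x X)) (hY : SpansCopy F G Y)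
    (hd : Disjoint (S ∪ insert x X) Y) : PerfTilingOn F G (insert x (S ∪ X ∪ Y)) := by
  convert h.union hY.perfTilingOn hd using 1
  ext a
  simp only [mem_insert, mem_union]
  tauto

theorem PerfTilingOn.union_of_insert_erase {S₁ S₂ X : Finset (Fin n)} {x : Fin n}
    (h₁ : PerfTilingOn F G (insert x S₁)) (h₂ : PerfTilingOn F G (S₂ ∪ X.erase x))
    (hx : x ∈ X) (hxS₂ : x ∉ S₂) (hS₁₂ : Disjoint S₁ S₂) (hS₁X : Disjoint S₁ X) :
    PerfTilingOn F G (S₁ ∪ S₂ ∪ X) := by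
  have hd : Disjoint (insert x S₁) (S₂ ∪ X.erase x) := by
    rw [disjoint_insert_left, disjoint_union_right]
    exact ⟨by simp [hxS₂], hS₁₂, hS₁X.mono_right (erase_subset x X)⟩
  convert h₁.union h₂ hd using 1
  ext a
  by_cases hax : a = x
  · subst hax
    simp [hx]
  · simp [hax]

theorem add_two_mul_le_mul_sub_one {a k t : ℕ} (hk : 2 ≤ k)
    (h : a + (k + 1) ≤ (k + 1) * (k * t)) : a + 2 * k ≤ k * (2 * k * t) - 1 := by
  obtain _ | t := t
  · simp at h
  · apply Nat.le_sub_one_of_lt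
    nlinarith

section Partition

variable {C : ℕ} {P : Fin C → Finset (Fin n)}

theorem IsPartition.exists_mem (hP : IsPartition P) (a : Fin n) : ∃ l, a ∈ P l := by
  have h : a ∈ univ.biUnion P := hP.2 ▸ mem_univ a
  simpa using h

theorem IsPartition.eq_of_mem (hP : IsPartition P) {a : Fin n} {l l' : Fin C}
    (h : a ∈ P l) (h' : a ∈ P l') : l = l' := by
  by_contra hne
  exact disjoint_left.mp (hP.1 l l' hne) h h'

theorem IsPartition.eq_empty_of_card_inter_eq_zero (hP : IsPartition P) {S : Finset (Fin n)}
    (h : ∀ l, #(S ∩ P l) = 0) : S = ∅ :=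
  eq_empty_of_forall_notMem fun a ha => by
    obtain ⟨l, hal⟩ := hP.exists_mem a
    exact eq_empty_iff_forall_notMem.mp (card_eq_zero.mp (h l)) a (mem_inter.mpr ⟨ha, hal⟩)

theorem IsPartition.card_insert_inter (hP : IsPartition P) {S : Finset (Fin n)} {a : Fin n}
    {i : Fin C} (ha : a ∈ P i) (haS : a ∉ S) (l : Fin C) :
    #(insert a S ∩ P l) = #(S ∩ P l) + if l = i then 1 else 0 := by
  split_ifs with hl
  · subst hl
    rw [insert_inter_of_mem ha, card_insert_of_notMem (fun h => haS (mem_inter.mp h).1)]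
  · rw [insert_inter_of_notMem (fun h => hl (hP.eq_of_mem h ha)), add_zero]

theorem IsPartition.card_inter_eq_erase (hP : IsPartition P) {A : Finset (Fin n)} {a : Fin n}
    {i : Fin C} (ha : a ∈ P i) (haA : a ∈ A) (l : Fin C) :
    #(A ∩ P l) = #(A.erase a ∩ P l) + if l = i then 1 else 0 := by
  simpa [insert_erase haA] using hP.card_insert_inter ha (notMem_erase a A) l

/-- The bound `#S + r ≤ r * (k * t)` replaces `#S ≤ r * (k * t - 1)`, whose truncated subtraction
would lose the information `0 < t` when `0 < r`. -/
theorem exists_common_completion (hP : IsPartition P) (hk : 2 ≤ k) {m : ℝ} {t : ℕ}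
    (hcl : ∀ l, FClosed F G m t (P l)) (r : ℕ) :
    ∀ {A B W : Finset (Fin n)}, #A = r → Disjoint A B → (∀ l, #(A ∩ P l) = #(B ∩ P l)) →
      A ⊆ W → B ⊆ W → ((#W + r * (k * t) : ℕ) : ℝ) ≤ m →
      ∃ S, Disjoint S W ∧ #S + r ≤ r * (k * t) ∧
        PerfTilingOn F G (S ∪ A) ∧ PerfTilingOn F G (S ∪ B) := by
  induction r with
  | zero =>
    intro A B W hA _ hidx _ _ _
    rw [card_eq_zero] at hA
    subst hA
    obtain rfl : B = ∅ := hP.eq_empty_of_card_inter_eq_zero fun l => by simpa using (hidx l).symm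
    exact ⟨∅, disjoint_empty_left W, by simp, by simpa using perfTilingOn_empty,
      by simpa using perfTilingOn_empty⟩
  | succ r ih =>
    intro A B W hA hAB hidx hAW hBW hm
    obtain ⟨z, hz⟩ : A.Nonempty := card_pos.mp (by omega)
    obtain ⟨l, hzl⟩ := hP.exists_mem z
    have hA_erase := hP.card_inter_eq_erase hzl hz
    obtain ⟨w, hw⟩ : (B ∩ P l).Nonempty := card_pos.mp <| by
      have := hA_erase l
      rw [if_pos rfl] at this
      rw [← hidx l]
      omega
    obtain ⟨hwB, hwl⟩ := mem_inter.mp hw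
    have hB_erase := hP.card_inter_eq_erase hwl hwB
    have hzw : z ≠ w := fun h => disjoint_left.mp hAB hz (h ▸ hwB)
    obtain ⟨Sz, hSzW, hzSz, hwSz, hSzc, hSzz, hSzw⟩ :=
      hcl l z hzl w hwl hzw W (le_trans (by exact_mod_cast Nat.le_add_right _ _) hm)
    have hSz : #Sz + 1 ≤ k * t := by
      have := hSzz.le_card (mem_insert_self z Sz)
      rw [card_insert_of_notMem hzSz] at this
      omega
    obtain ⟨S', hS'W, hS'c, hS'A, hS'B⟩ :=
      ih (A := A.erase z) (B := B.erase w) (W := W ∪ Sz)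
      (by rw [card_erase_of_mem hz, hA]; rfl) (hAB.mono (erase_subset z A) (erase_subset w B))
      (fun l' => by have := hA_erase l'; have := hB_erase l'; have := hidx l'; omega)
      ((erase_subset z A).trans (hAW.trans subset_union_left))
      ((erase_subset w B).trans (hBW.trans subset_union_left))
      (le_trans (by norm_cast; have := card_union_le W Sz; nlinarith) hm)
    have hSzS' : Disjoint Sz S' := (hS'W.mono_right subset_union_right).symm
    have hS'W' (x : Fin n) (hx : x ∈ W) : x ∉ S' :=
      fun h => disjoint_left.mp hS'W h (mem_union_left Sz hx)
    refine ⟨Sz ∪ S', ?_, ?_,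
      hSzz.union_of_insert_erase hS'A hz (hS'W' z (hAW hz)) hSzS' (hSzW.mono_right hAW),
      hSzw.union_of_insert_erase hS'B hwB (hS'W' w (hBW hwB)) hSzS' (hSzW.mono_right hBW)⟩
    · exact disjoint_union_left.mpr ⟨hSzW, hS'W.mono_right subset_union_left⟩
    · have := card_union_le Sz S'
      nlinarith

theorem exists_disjoint_copies_of_robustVec {β : ℝ} {s t' : Fin C → ℕ}
    (hs : RobustVec F G P β s) (ht : RobustVec F G P β t') {W : Finset (Fin n)}
    (hW : ((#W + k : ℕ) : ℝ) ≤ β * n) :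
    ∃ Ss St, SpansCopy F G Ss ∧ (∀ l, #(Ss ∩ P l) = s l) ∧
      SpansCopy F G St ∧ (∀ l, #(St ∩ P l) = t' l) ∧
      Disjoint Ss W ∧ Disjoint St W ∧ Disjoint St Ss := by
  obtain ⟨Ss, hSsW, hSs, hSsP⟩ := hs.2 W (le_trans (by exact_mod_cast Nat.le_add_right _ _) hW)
  have hWSs : ((#(W ∪ Ss) : ℕ) : ℝ) ≤ β * n :=
    le_trans (by exact_mod_cast (card_union_le W Ss).trans_eq (by rw [hSs.card_eq])) hW
  obtain ⟨St, hStd, hSt, hStP⟩ := ht.2 (W ∪ Ss) hWSs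
  rw [disjoint_union_right] at hStd
  exact ⟨Ss, St, hSs, hSsP, hSt, hStP, hSsW, hStd.1, hStd.2⟩

theorem fReachable_of_robustVec (hP : IsPartition P) (hk : 2 ≤ k) {β m : ℝ} {t : ℕ}
    (hm : m + ((2 * k + 2 + (k + 1) * (k * t) : ℕ) : ℝ) ≤ β * n)
    (hcl : ∀ l, FClosed F G (β * n) t (P l)) {i j : Fin C} {s t' : Fin C → ℕ}
    (hs : RobustVec F G P β s) (ht : RobustVec F G P β t')
    (hst : ∀ l, (s l : ℤ) - t' l = (if l = i then 1 else 0) - (if l = j then 1 else 0))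
    {u v : Fin n} (hu : u ∈ P i) (hv : v ∈ P j) (huv : u ≠ v) :
    FReachable F G m (2 * k * t) u v := by
  intro W hW
  have budget (X : Finset (Fin n)) (r : ℕ)
      (hX : #X + r ≤ #W + (2 * k + 2 + (k + 1) * (k * t))) : ((#X + r : ℕ) : ℝ) ≤ β * n := by
    have : ((#X + r : ℕ) : ℝ) ≤ #W + ((2 * k + 2 + (k + 1) * (k * t) : ℕ) : ℝ) := by
      exact_mod_cast hX
    linarith
  obtain ⟨Ss, St, hSs, hSsP, hSt, hStP, hSsd, hStd, hStSs⟩ :=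
    exists_disjoint_copies_of_robustVec hs ht <| budget (W ∪ {u, v}) k <| by
      have := card_union_le W {u, v}
      have := card_le_two (a := u) (b := v)
      omega
  simp only [disjoint_union_right, disjoint_insert_right, disjoint_singleton_right] at hSsd hStd
  obtain ⟨hSsW, huSs, hvSs⟩ := hSsd
  obtain ⟨hStW, huSt, hvSt⟩ := hStd
  have hW' : #(W ∪ insert u St ∪ insert v Ss) ≤ #W + (2 * k + 2) := by
    have := card_union_le (W ∪ insert u St) (insert v Ss)
    have := card_union_le W (insert u St)
    have := card_insert_le u St
    have := card_insert_le v Ss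
    rw [hSs.card_eq, hSt.card_eq] at *
    omega
  obtain ⟨S₀, hS₀W', hS₀c, hS₀u, hS₀v⟩ := exists_common_completion hP hk hcl (k + 1)
    (A := insert u St) (B := insert v Ss) (W := W ∪ insert u St ∪ insert v Ss)
    (by rw [card_insert_of_notMem huSt, hSt.card_eq])
    (by
      rw [disjoint_insert_left, disjoint_insert_right]
      exact ⟨by simp [huv, huSs], hvSt, hStSs⟩)
    (fun l => by
      rw [hP.card_insert_inter hu huSt, hP.card_insert_inter hv hvSs, hSsP, hStP]
      have := hst l
      split_ifs at this ⊢ <;> omega)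
    (subset_union_right.trans subset_union_left) subset_union_right
    (budget _ _ (by omega))
  simp only [disjoint_union_right, disjoint_insert_right] at hS₀W'
  obtain ⟨⟨hS₀W, huS₀, hS₀St⟩, hvS₀, hS₀Ss⟩ := hS₀W'
  refine ⟨S₀ ∪ Ss ∪ St, ?_, by simp [huS₀, huSs, huSt], by simp [hvS₀, hvSs, hvSt], ?_, ?_, ?_⟩
  · simp only [disjoint_union_left]
    exact ⟨⟨hS₀W, hSsW⟩, hStW⟩
  · have h₁ := card_union_le (S₀ ∪ Ss) St
    have h₂ := card_union_le S₀ Ss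
    have h₃ := add_two_mul_le_mul_sub_one hk hS₀c
    rw [hSs.card_eq, hSt.card_eq] at *
    omega
  · rw [union_right_comm]
    exact hS₀u.insert_union_of_spansCopy hSs (by
      simp only [disjoint_union_left, disjoint_insert_left]
      exact ⟨hS₀Ss, huSs, hStSs⟩)
  · exact hS₀v.insert_union_of_spansCopy hSt (by
      simp only [disjoint_union_left, disjoint_insert_left]
      exact ⟨hS₀St, hvSt, hStSs.symm⟩)

end Partition

end RTT

open RTT in
/-- Transferral lemma: if two robust `k`-vectors differ by `u_i - u_j`,
then the union of the closed parts `V_i` and `V_j` is `(F,(β/2)n,2kt)`-closed. -/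
theorem transferral :
    ∀ k t : ℕ, 3 ≤ k → ∀ β : ℝ, 0 < β →
    ∃ N : ℕ, ∀ n : ℕ, N ≤ n →
      ∀ F : SimpleGraph (Fin k), ∀ G : SimpleGraph (Fin n),
      ∀ C : ℕ, ∀ P : Fin C → Finset (Fin n), IsPartition P →
        (∀ i, FClosed F G (β * n) t (P i)) →
        ∀ i j : Fin C, i ≠ j →
        ∀ s t' : Fin C → ℕ,
          RobustVec F G P β s → RobustVec F G P β t' →
          (∀ l : Fin C, (s l : ℤ) - (t' l : ℤ) =
            (if l = i then 1 else 0) - (if l = j then 1 else 0)) →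
          FClosed F G ((β / 2) * n) (2 * k * t) (P i ∪ P j) := by
  intro k t hk β hβ
  obtain ⟨N, hN⟩ := exists_nat_gt (2 * ((2 * k + 2 + (k + 1) * (k * t) : ℕ) : ℝ) / β)
  refine ⟨N, fun n hn F G C P hP hcl i j _ s t' hs ht hst => ?_⟩
  have hbudget : β / 2 * n + ((2 * k + 2 + (k + 1) * (k * t) : ℕ) : ℝ) ≤ β * n := by
    have := hN.trans_le (Nat.cast_le.mpr hn)
    rw [div_lt_iff₀ hβ] at this
    linarith
  have hhalf : β / 2 * n ≤ β * n := by
    have : (0 : ℝ) ≤ ((2 * k + 2 + (k + 1) * (k * t) : ℕ) : ℝ) := Nat.cast_nonneg _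
    linarith
  have ht_le : t ≤ 2 * k * t := Nat.le_mul_of_pos_left t (by omega)
  have hts : ∀ l, (t' l : ℤ) - s l = (if l = j then 1 else 0) - (if l = i then 1 else 0) :=
    fun l => by linarith [hst l]
  intro u hu v hv huv
  rcases mem_union.mp hu with hu | hu <;> rcases mem_union.mp hv with hv | hv
  · exact (hcl i u hu v hv huv).mono hhalf ht_le
  · exact fReachable_of_robustVec hP (by omega) hbudget hcl hs ht hst hu hv huv
  · exact fReachable_of_robustVec hP (by omega) hbudget hcl ht hs hts hu hv huv
  · exact (hcl j u hu v hv huv).mono hhalf ht_le
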